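/- Let ε > 0 and let s : Δ_{L−1} → 𝒫([L]) be any selection rule that is ε-compatible, permutation invariant, and contains the argmax. Then for any w ∈ Δ_{L−1} and any j ∈ [L], if s(w) = {j} then argmax^ε(w) = {j}. -/

import Mathlib

/-!
If `s w = {j}`, then `j` is an argmax of `w`, so moving `w` by `ε/√2` in coordinate `j` lands in
`R_j^ε` and `j ∈ argmax^ε(w)`. For `k ≠ j`, permutation invariance makes the selection at the
vector `w` with coordinates `j, k` swapped equal to `{k}`, disjoint from `{j}`; compatibility then
puts that vector at distance `√2 (w_j - w_k) ≥ ε`. With this gap `w_j - w_k ≥ ε/√2`, reaching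
`R_k^ε` requires moving coordinates `j` and `k` by `√2 ε` in total, i.e. a distance at least `ε`.
-/

noncomputable section

/-- The set `R_j^ε = {w ∈ ℝ^L : w_j ≥ max_{ℓ≠j} w_ℓ + ε/√2}`. -/
def Rset (L : ℕ) (ε : ℝ) (j : Fin L) : Set (EuclideanSpace ℝ (Fin L)) :=
  {w | ∀ ℓ : Fin L, ℓ ≠ j → w ℓ + ε / Real.sqrt 2 ≤ w j}

/-- The inflated argmax: `argmax^ε(w) = {j ∈ [L] : dist(w, R_j^ε) < ε}`. -/
def inflatedArgmax (L : ℕ) (ε : ℝ) (w : EuclideanSpace ℝ (Fin L)) : Set (Fin L) :=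
  {j | Metric.infDist w (Rset L ε j) < ε}

/-- The probability simplex `Δ_{L−1}`. -/
def simplex (L : ℕ) : Set (EuclideanSpace ℝ (Fin L)) :=
  {w | (∀ i, 0 ≤ w i) ∧ ∑ i, w i = 1}

open Metric

section EuclideanCoordinates

variable {ι : Type*} [Fintype ι]

theorem sq_add_sq_le_dist_sq (x y : EuclideanSpace ℝ ι) {i k : ι} (hik : i ≠ k) :
    (x i - y i) ^ 2 + (x k - y k) ^ 2 ≤ dist x y ^ 2 := by
  rw [EuclideanSpace.dist_eq, Real.sq_sqrt (by positivity)]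
  simp only [Real.dist_eq, sq_abs]
  exact Finset.add_le_sum (f := fun l => (x l - y l) ^ 2) (fun _ _ => sq_nonneg _)
    (Finset.mem_univ i) (Finset.mem_univ k) hik

theorem dist_comp_swap [DecidableEq ι] (x : EuclideanSpace ℝ ι) {i k : ι} (hik : i ≠ k) :
    dist x (WithLp.toLp 2 (x ∘ Equiv.swap i k)) = √2 * |x i - x k| := by
  have hsum : ∑ l, (x l - x (Equiv.swap i k l)) ^ 2 = 2 * (x i - x k) ^ 2 := by
    rw [← Finset.sum_subset (Finset.subset_univ {i, k}), Finset.sum_pair hik,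
      Equiv.swap_apply_left, Equiv.swap_apply_right]
    · ring
    · intro l _ hl
      simp only [Finset.mem_insert, Finset.mem_singleton, not_or] at hl
      simp [Equiv.swap_apply_of_ne_of_ne hl.1 hl.2]
  simp only [EuclideanSpace.dist_eq, Real.dist_eq, sq_abs, Function.comp_apply, hsum]
  rw [Real.sqrt_mul zero_le_two, Real.sqrt_sq_eq_abs]

theorem add_div_sqrt_two_le_of_le_dist_swap [DecidableEq ι] {x : EuclideanSpace ℝ ι} {i k : ι}
    {ε : ℝ} (hik : i ≠ k) (hki : x k ≤ x i)
    (hε : ε ≤ dist x (WithLp.toLp 2 (x ∘ Equiv.swap i k))) :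
    x k + ε / √2 ≤ x i := by
  rw [dist_comp_swap x hik, abs_of_nonneg (sub_nonneg.2 hki)] at hε
  linarith [(div_le_iff₀' (by positivity : (0 : ℝ) < √2)).2 hε]

end EuclideanCoordinates

theorem comp_perm_mem_simplex {L : ℕ} {w : EuclideanSpace ℝ (Fin L)} (hw : w ∈ simplex L)
    (σ : Equiv.Perm (Fin L)) : WithLp.toLp 2 (w ∘ σ) ∈ simplex L :=
  ⟨fun i => hw.1 (σ i), by simpa only [Function.comp_apply] using (Equiv.sum_comp σ w).trans hw.2⟩

section InflatedArgmax

variable {L : ℕ} {ε : ℝ}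

theorem add_single_mem_Rset {w : EuclideanSpace ℝ (Fin L)} {j : Fin L} (hj : ∀ ℓ, w ℓ ≤ w j) :
    w + PiLp.single 2 j (ε / √2) ∈ Rset L ε j := by
  intro ℓ hℓ
  simpa [PiLp.single_apply, hℓ] using hj ℓ

theorem Rset_nonempty (j : Fin L) : (Rset L ε j).Nonempty :=
  ⟨_, add_single_mem_Rset (w := 0) fun _ => le_rfl⟩

theorem mem_inflatedArgmax_of_isMax (hε : 0 < ε) {w : EuclideanSpace ℝ (Fin L)} {j : Fin L}
    (hj : ∀ ℓ, w ℓ ≤ w j) : j ∈ inflatedArgmax L ε w := by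
  have hdist : dist w (w + PiLp.single 2 j (ε / √2)) = ε / √2 := by
    rw [dist_self_add_right, PiLp.norm_single, Real.norm_of_nonneg (by positivity)]
  calc infDist w (Rset L ε j) ≤ ε / √2 := hdist ▸ infDist_le_dist_of_mem (add_single_mem_Rset hj)
    _ < ε := div_lt_self hε (by simp [Real.lt_sqrt])

theorem notMem_inflatedArgmax_of_gap (hε : 0 < ε) {w : EuclideanSpace ℝ (Fin L)} {j k : Fin L}
    (hkj : k ≠ j)
    (hgap : w k + ε / √2 ≤ w j) : k ∉ inflatedArgmax L ε w := by
  suffices ε ≤ infDist w (Rset L ε k) from this.not_gt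
  refine (le_infDist (Rset_nonempty k)).2 fun u hu => ?_
  have hmoved : 2 * (ε / √2) ≤ (w j - u j) + (u k - w k) := by linarith [hu j hkj.symm]
  have hsq : 2 * (ε / √2) ^ 2 = ε ^ 2 := by
    rw [div_pow, Real.sq_sqrt zero_le_two]; ring
  have hc : 0 ≤ ε / √2 := by positivity
  have : ε ^ 2 ≤ dist w u ^ 2 := by
    nlinarith [sq_add_sq_le_dist_sq w u hkj.symm, sq_nonneg (w j - u j - (u k - w k))]
  exact abs_le_of_sq_le_sq' this dist_nonneg |>.2

end InflatedArgmax

section SelectionRule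

variable {L : ℕ} {s : EuclideanSpace ℝ (Fin L) → Set (Fin L)} {w : EuclideanSpace ℝ (Fin L)}
  {j : Fin L}

theorem isMax_of_selection_eq_singleton
    (hargmax : ∀ w ∈ simplex L, {j : Fin L | ∀ ℓ : Fin L, w ℓ ≤ w j} ⊆ s w)
    (hw : w ∈ simplex L) (hs : s w = {j}) (ℓ : Fin L) : w ℓ ≤ w j := by
  have : Nonempty (Fin L) := ⟨j⟩
  obtain ⟨b, hb⟩ := Finite.exists_max (fun i => w i)
  have hbj : b ∈ s w := hargmax w hw hb
  rw [hs, Set.mem_singleton_iff] at hbj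
  exact hbj ▸ hb ℓ

theorem le_dist_swap_of_selection_eq_singleton {ε : ℝ}
    (hcompat : ∀ v w : EuclideanSpace ℝ (Fin L), v ∈ simplex L → w ∈ simplex L →
      dist v w < ε → (s v ∩ s w).Nonempty)
    (hperm : ∀ w v : EuclideanSpace ℝ (Fin L), w ∈ simplex L →
      ∀ σ : Equiv.Perm (Fin L), (∀ i, v i = w (σ i)) →
        ∀ j : Fin L, j ∈ s v ↔ σ j ∈ s w)
    (hw : w ∈ simplex L) (hs : s w = {j}) {k : Fin L} (hkj : k ≠ j) :
    ε ≤ dist w (WithLp.toLp 2 (w ∘ Equiv.swap j k)) := by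
  by_contra! hlt
  obtain ⟨x, hx, hx'⟩ := hcompat _ _ hw (comp_perm_mem_simplex hw _) hlt
  rw [hs, Set.mem_singleton_iff] at hx
  subst hx
  have hswap := (hperm w _ hw (Equiv.swap x k) (fun _ => rfl) x).1 hx'
  rw [hs, Equiv.swap_apply_left, Set.mem_singleton_iff] at hswap
  exact hkj hswap

end SelectionRule

theorem inflatedArgmax_optimal_general (L : ℕ) (ε : ℝ) (hε : 0 < ε)
    (s : EuclideanSpace ℝ (Fin L) → Set (Fin L))
    (hcompat : ∀ v w : EuclideanSpace ℝ (Fin L), v ∈ simplex L → w ∈ simplex L →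
      dist v w < ε → (s v ∩ s w).Nonempty)
    (hperm : ∀ w v : EuclideanSpace ℝ (Fin L), w ∈ simplex L →
      ∀ σ : Equiv.Perm (Fin L), (∀ i, v i = w (σ i)) →
        ∀ j : Fin L, j ∈ s v ↔ σ j ∈ s w)
    (hargmax : ∀ w ∈ simplex L, {j : Fin L | ∀ ℓ : Fin L, w ℓ ≤ w j} ⊆ s w)
    (w : EuclideanSpace ℝ (Fin L)) (hw : w ∈ simplex L) (j : Fin L)
    (hs : s w = {j}) :
    inflatedArgmax L ε w = {j} := by
  have hmax := isMax_of_selection_eq_singleton hargmax hw hs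
  ext k
  refine ⟨fun hk => ?_, fun hk => Set.mem_singleton_iff.1 hk ▸ mem_inflatedArgmax_of_isMax hε hmax⟩
  by_contra hkj
  have hgap := add_div_sqrt_two_le_of_le_dist_swap (Ne.symm hkj) (hmax k)
    (le_dist_swap_of_selection_eq_singleton hcompat hperm hw hs hkj)
  exact notMem_inflatedArgmax_of_gap hε hkj hgap hk

/-- Optimality of the inflated argmax: any `ε`-compatible, permutation-invariant
selection rule containing the argmax returns a singleton `{j}` only when
`argmax^ε(w) = {j}`. -/
theorem inflatedArgmax_optimal (L : ℕ) (hL : 2 ≤ L) (ε : ℝ) (hε : 0 < ε)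
    (s : EuclideanSpace ℝ (Fin L) → Set (Fin L))
    (hcompat : ∀ v w : EuclideanSpace ℝ (Fin L), v ∈ simplex L → w ∈ simplex L →
      dist v w < ε → (s v ∩ s w).Nonempty)
    (hperm : ∀ w v : EuclideanSpace ℝ (Fin L), w ∈ simplex L →
      ∀ σ : Equiv.Perm (Fin L), (∀ i, v i = w (σ i)) →
        ∀ j : Fin L, j ∈ s v ↔ σ j ∈ s w)
    (hargmax : ∀ w ∈ simplex L, {j : Fin L | ∀ ℓ : Fin L, w ℓ ≤ w j} ⊆ s w)
    (w : EuclideanSpace ℝ (Fin L)) (hw : w ∈ simplex L) (j : Fin L)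
    (hs : s w = {j}) :
    inflatedArgmax L ε w = {j} :=
  inflatedArgmax_optimal_general L ε hε s hcompat hperm hargmax w hw j hs
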